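/- Let ω ∈ 𝓑'₀ have power series expansion ω(z) = c₁z + c₂z² + c₃z³ + ⋯ on 𝔻. If 0 ≤ |c₁| ≤ 2/5 then |c₃ − 2c₁c₂| ≤ (1/12)·(1 + |c₁|)·(9|c₁|² − 4|c₁| + 4), and if 2/5 ≤ |c₁| ≤ 1 then |c₃ − 2c₁c₂| ≤ (4/3)·|c₁|·(1 − |c₁|²). -/

import Mathlib

/-!
Put `f = ω'`, a holomorphic self-map of the closed unit disk with Taylor coefficients
`c₁, 2c₂, 3c₃, …`. One step of Schur's algorithm: for `a = f 0` with `|a| < 1`, the function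
`(f - a) / (1 - ā f)` vanishes at `0` and maps the disk into itself, so by Schwarz's lemma it is
`z g(z)` with `|g| ≤ 1`. Comparing Taylor coefficients gives
`2c₂ = (1 - |c₁|²) g(0)` and `3c₃ = (1 - |c₁|²) (g'(0) - c̄₁ g(0)²)`, and Schwarz–Pick bounds
`|g'(0)| ≤ 1 - |g(0)|²`. With `t = |c₁|`, `s = |g(0)|` this leaves
`|c₃ - 2c₁c₂| ≤ (1 - t²)(1 - s² + t s²)/3 + t(1 - t²)s`, a concave quadratic in `s` whose
maximum is attained at `s = 3t / (2(1 - t))` when `t ≤ 2/5` and at `s = 1` otherwise.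
-/
open Complex Metric Filter Set
open scoped Topology ComplexConjugate NNReal

lemma norm_one_sub_conj_mul_sq_sub_norm_sub_sq (a w : ℂ) :
    ‖1 - conj a * w‖ ^ 2 - ‖w - a‖ ^ 2 = (1 - ‖a‖ ^ 2) * (1 - ‖w‖ ^ 2) := by
  simp only [Complex.sq_norm, Complex.normSq_apply, Complex.sub_re, Complex.sub_im,
    Complex.mul_re, Complex.mul_im, Complex.conj_re, Complex.conj_im, Complex.one_re,
    Complex.one_im]
  ring

lemma one_sub_conj_mul_ne_zero {a w : ℂ} (ha : ‖a‖ < 1) (hw : ‖w‖ ≤ 1) : 1 - conj a * w ≠ 0 := by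
  refine sub_ne_zero.mpr fun h ↦ ?_
  have : ‖conj a * w‖ < 1 := by
    rw [norm_mul, RCLike.norm_conj]
    nlinarith [norm_nonneg a]
  simp [← h] at this

lemma norm_sub_div_one_sub_conj_mul_le_one {a w : ℂ} (ha : ‖a‖ < 1) (hw : ‖w‖ ≤ 1) :
    ‖(w - a) / (1 - conj a * w)‖ ≤ 1 := by
  have hpos : 0 < ‖1 - conj a * w‖ := norm_pos_iff.mpr (one_sub_conj_mul_ne_zero ha hw)
  rw [norm_div, div_le_one hpos]
  have := norm_one_sub_conj_mul_sq_sub_norm_sub_sq a w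
  nlinarith [mul_nonneg (by nlinarith [norm_nonneg a] : (0:ℝ) ≤ 1 - ‖a‖ ^ 2)
    (by nlinarith [norm_nonneg w] : (0:ℝ) ≤ 1 - ‖w‖ ^ 2), norm_nonneg (w - a)]

lemma norm_one_sub_norm_sq {a : ℂ} (ha : ‖a‖ ≤ 1) : ‖(1 - ‖a‖ ^ 2 : ℂ)‖ = 1 - ‖a‖ ^ 2 := by
  rw [show (1 - ‖a‖ ^ 2 : ℂ) = ((1 - ‖a‖ ^ 2 : ℝ) : ℂ) by push_cast; rfl, norm_real,
    Real.norm_of_nonneg (by nlinarith [norm_nonneg a])]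

lemma hasFPowerSeriesOnBall_ofScalars_of_hasSum {f : ℂ → ℂ} {a : ℕ → ℂ} {r : ℝ≥0} (hr : 0 < r)
    (h : ∀ z ∈ ball (0 : ℂ) r, HasSum (fun n ↦ a n * z ^ n) (f z)) :
    HasFPowerSeriesOnBall f (FormalMultilinearSeries.ofScalars ℂ a) 0 r where
  r_le := by
    refine ENNReal.le_of_forall_nnreal_lt fun ρ hρ ↦ ?_
    have hρr : (ρ : ℂ) ∈ ball (0 : ℂ) r := by simpa using hρ
    refine FormalMultilinearSeries.le_radius_of_tendsto _ (l := 0) ?_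
    simpa [FormalMultilinearSeries.ofScalars_norm] using
      (h _ hρr).summable.tendsto_atTop_zero.norm
  r_pos := by simpa using hr
  hasSum {y} hy := by
    simpa [FormalMultilinearSeries.ofScalars_apply_eq, mul_comm] using h y (by simpa using hy)

lemma iteratedDeriv_eq_factorial_mul_of_hasSum {f : ℂ → ℂ} {a : ℕ → ℂ} {r : ℝ≥0} (hr : 0 < r)
    (h : ∀ z ∈ ball (0 : ℂ) r, HasSum (fun n ↦ a n * z ^ n) (f z)) (n : ℕ) :
    iteratedDeriv n f 0 = n.factorial * a n := by
  have hp := (hasFPowerSeriesOnBall_ofScalars_of_hasSum hr h).hasFPowerSeriesAt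
  have := congrFun (FormalMultilinearSeries.ofScalars_series_injective ℂ ℂ
    (hp.eq_formalMultilinearSeries hp.analyticAt.hasFPowerSeriesAt)) n
  rw [this, mul_div_cancel₀ _ (by exact_mod_cast n.factorial_ne_zero)]

lemma iteratedDeriv_succ_id_mul_zero {𝕜 : Type*} [NontriviallyNormedField 𝕜] {g : 𝕜 → 𝕜} {n : ℕ}
    (hg : ContDiffAt 𝕜 (n + 1) g 0) :
    iteratedDeriv (n + 1) (fun z ↦ z * g z) 0 = (n + 1) * iteratedDeriv n g 0 := by
  rw [iteratedDeriv_fun_mul contDiffAt_id (by exact_mod_cast hg),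
    Finset.sum_eq_single 1 (fun i _ hi ↦ by simp [iteratedDeriv_fun_id_zero, hi]) (by simp)]
  simp [iteratedDeriv_fun_id_zero]

section

variable {f : ℂ → ℂ}

lemma eventuallyEq_const_of_norm_eq_one (hf : DifferentiableOn ℂ f (ball 0 1))
    (hmaps : MapsTo f (ball 0 1) (closedBall 0 1)) (h1 : ‖f 0‖ = 1) :
    f =ᶠ[𝓝 0] fun _ ↦ f 0 := by
  have hmax : IsMaxOn (norm ∘ f) (ball 0 1) 0 := fun z hz ↦ by
    simpa [h1] using hmaps hz
  exact (Complex.eqOn_of_isPreconnected_of_isMaxOn_norm (convex_ball 0 1).isPreconnected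
    isOpen_ball hf (mem_ball_self one_pos) hmax).eventuallyEq_of_mem (ball_mem_nhds 0 one_pos)

lemma exists_eqOn_add_mul_one_sub_conj_mul (hf : DifferentiableOn ℂ f (ball 0 1))
    (hmaps : MapsTo f (ball 0 1) (closedBall 0 1)) (ha : ‖f 0‖ < 1) :
    ∃ h : ℂ → ℂ, DifferentiableOn ℂ h (ball 0 1) ∧ MapsTo h (ball 0 1) (closedBall 0 1) ∧
      h 0 = 0 ∧ EqOn f (fun z ↦ f 0 + h z * (1 - conj (f 0) * f z)) (ball 0 1) := by
  have hden : ∀ z ∈ ball (0 : ℂ) 1, 1 - conj (f 0) * f z ≠ 0 := fun z hz ↦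
    one_sub_conj_mul_ne_zero ha (mem_closedBall_zero_iff.mp (hmaps hz))
  refine ⟨fun z ↦ (f z - f 0) / (1 - conj (f 0) * f z),
    (hf.sub_const _).div ((hf.const_mul _).const_sub 1) hden, fun z hz ↦ ?_, by simp, ?_⟩
  · exact mem_closedBall_zero_iff.mpr
      (norm_sub_div_one_sub_conj_mul_le_one ha (mem_closedBall_zero_iff.mp (hmaps hz)))
  · intro z hz
    simp [div_mul_cancel₀ _ (hden z hz)]

section

variable {h : ℂ → ℂ} (hf : AnalyticAt ℂ f 0) (hh : AnalyticAt ℂ h 0) (h0 : h 0 = 0)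
  (hfh : f =ᶠ[𝓝 0] fun z ↦ f 0 + h z * (1 - conj (f 0) * f z))
include hf hh h0 hfh

lemma deriv_eq_of_eventuallyEq_add_mul : deriv f 0 = (1 - ‖f 0‖ ^ 2) * deriv h 0 := by
  have := hfh.iteratedDeriv_eq 1
  rw [iteratedDeriv_const_add one_pos, iteratedDeriv_fun_mul hh.contDiffAt
    (contDiffAt_const.sub (contDiffAt_const.mul hf.contDiffAt))] at this
  simp [Finset.sum_range_succ, h0, conj_mul'] at this
  linear_combination this

lemma iteratedDeriv_two_eq_of_eventuallyEq_add_mul :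
    iteratedDeriv 2 f 0 =
      (1 - ‖f 0‖ ^ 2) * iteratedDeriv 2 h 0 - 2 * conj (f 0) * deriv h 0 * deriv f 0 := by
  have := hfh.iteratedDeriv_eq 2
  rw [iteratedDeriv_const_add two_pos, iteratedDeriv_fun_mul hh.contDiffAt
    (contDiffAt_const.sub (contDiffAt_const.mul hf.contDiffAt))] at this
  simp [Finset.sum_range_succ, h0, conj_mul'] at this
  linear_combination this

end

theorem norm_deriv_le_one_sub_norm_sq (hf : DifferentiableOn ℂ f (ball 0 1))
    (hmaps : MapsTo f (ball 0 1) (closedBall 0 1)) : ‖deriv f 0‖ ≤ 1 - ‖f 0‖ ^ 2 := by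
  have hball : ball (0 : ℂ) 1 ∈ 𝓝 0 := ball_mem_nhds 0 one_pos
  rcases (mem_closedBall_zero_iff.mp (hmaps (mem_ball_self one_pos))).lt_or_eq with ha | ha
  · obtain ⟨h, hd, hhmaps, h0, hfh⟩ := exists_eqOn_add_mul_one_sub_conj_mul hf hmaps ha
    have hschwarz : ‖deriv h 0‖ ≤ 1 :=
      Complex.norm_deriv_le_one_of_mapsTo_ball hd (by rwa [h0]) one_pos
    rw [deriv_eq_of_eventuallyEq_add_mul (hf.analyticAt hball) (hd.analyticAt hball) h0
      (hfh.eventuallyEq_of_mem hball), norm_mul, norm_one_sub_norm_sq ha.le]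
    exact mul_le_of_le_one_right (by nlinarith [norm_nonneg (f 0)]) hschwarz
  · rw [(eventuallyEq_const_of_norm_eq_one hf hmaps ha).deriv_eq, ha]
    simp

theorem exists_schur_parameters (hf : DifferentiableOn ℂ f (ball 0 1))
    (hmaps : MapsTo f (ball 0 1) (closedBall 0 1)) :
    ∃ b₀ b₁ : ℂ, ‖b₀‖ ≤ 1 ∧ ‖b₁‖ ≤ 1 - ‖b₀‖ ^ 2 ∧ deriv f 0 = (1 - ‖f 0‖ ^ 2) * b₀ ∧
      iteratedDeriv 2 f 0 = 2 * (1 - ‖f 0‖ ^ 2) * (b₁ - conj (f 0) * b₀ ^ 2) := by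
  have hball : ball (0 : ℂ) 1 ∈ 𝓝 0 := ball_mem_nhds 0 one_pos
  rcases (mem_closedBall_zero_iff.mp (hmaps (mem_ball_self one_pos))).lt_or_eq with ha | ha
  · obtain ⟨h, hd, hhmaps, h0, hfh⟩ := exists_eqOn_add_mul_one_sub_conj_mul hf hmaps ha
    set g := dslope h 0
    have hgd : DifferentiableOn ℂ g (ball 0 1) := (Complex.differentiableOn_dslope hball).mpr hd
    have hgmaps : MapsTo g (ball 0 1) (closedBall 0 1) := fun z hz ↦ by
      simpa using Complex.norm_dslope_le_div_of_mapsTo_ball hd (by rwa [h0]) hz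
    have hhg : h = fun z ↦ z * g z := funext fun z ↦ by
      simpa using (sub_smul_dslope_of_zero h0 z).symm
    have hg : ∀ n : WithTop ℕ∞, ContDiffAt ℂ n g 0 := fun _ ↦ (hgd.analyticAt hball).contDiffAt
    have hh1 : deriv h 0 = g 0 := by
      simpa [hhg] using iteratedDeriv_succ_id_mul_zero (n := 0) (hg _)
    have hh2 : iteratedDeriv 2 h 0 = 2 * deriv g 0 := by
      simpa [hhg, one_add_one_eq_two] using iteratedDeriv_succ_id_mul_zero (n := 1) (hg _)
    have hf1 := deriv_eq_of_eventuallyEq_add_mul (hf.analyticAt hball) (hd.analyticAt hball) h0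
      (hfh.eventuallyEq_of_mem hball)
    have hf2 := iteratedDeriv_two_eq_of_eventuallyEq_add_mul (hf.analyticAt hball)
      (hd.analyticAt hball) h0 (hfh.eventuallyEq_of_mem hball)
    refine ⟨g 0, deriv g 0, mem_closedBall_zero_iff.mp (hgmaps (mem_ball_self one_pos)),
      norm_deriv_le_one_sub_norm_sq hgd hgmaps, by rw [hf1, hh1], ?_⟩
    rw [hf2, hh2, hf1, hh1]
    ring
  · have hconst := eventuallyEq_const_of_norm_eq_one hf hmaps ha
    refine ⟨0, 0, by simp, by simp, ?_, ?_⟩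
    · simp [hconst.deriv_eq]
    · simp [hconst.iteratedDeriv_eq, iteratedDeriv_const]

end

lemma norm_sub_two_mul_le {c₁ c₂ c₃ b₀ b₁ : ℂ} (hc₁ : ‖c₁‖ ≤ 1) (hb₁ : ‖b₁‖ ≤ 1 - ‖b₀‖ ^ 2)
    (h₂ : 2 * c₂ = (1 - ‖c₁‖ ^ 2) * b₀)
    (h₃ : 6 * c₃ = 2 * (1 - ‖c₁‖ ^ 2) * (b₁ - conj c₁ * b₀ ^ 2)) :
    ‖c₃ - 2 * c₁ * c₂‖ ≤
      (1 - ‖c₁‖ ^ 2) * (1 - ‖b₀‖ ^ 2 + ‖c₁‖ * ‖b₀‖ ^ 2) / 3 + ‖c₁‖ * (1 - ‖c₁‖ ^ 2) * ‖b₀‖ := by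
  have hkey : c₃ - 2 * c₁ * c₂ =
      (1 - ‖c₁‖ ^ 2) * (b₁ - conj c₁ * b₀ ^ 2) / 3 - c₁ * ((1 - ‖c₁‖ ^ 2) * b₀) := by
    linear_combination (1 / 6 : ℂ) * h₃ - c₁ * h₂
  have hnorm : ‖b₁ - conj c₁ * b₀ ^ 2‖ ≤ 1 - ‖b₀‖ ^ 2 + ‖c₁‖ * ‖b₀‖ ^ 2 := by
    refine (norm_sub_le _ _).trans ?_
    rw [norm_mul, RCLike.norm_conj, norm_pow]
    linarith
  have hk : 0 ≤ 1 - ‖c₁‖ ^ 2 := by nlinarith [norm_nonneg c₁]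
  calc ‖c₃ - 2 * c₁ * c₂‖
      ≤ (1 - ‖c₁‖ ^ 2) * ‖b₁ - conj c₁ * b₀ ^ 2‖ / 3 + ‖c₁‖ * (1 - ‖c₁‖ ^ 2) * ‖b₀‖ := by
        rw [hkey]
        refine (norm_sub_le _ _).trans_eq ?_
        rw [norm_div, norm_mul, norm_mul, norm_mul, norm_one_sub_norm_sq hc₁, RCLike.norm_ofNat]
        ring
    _ ≤ _ := by gcongr

lemma schur_estimate_le_cubic {t : ℝ} (ht : 0 ≤ t) (s : ℝ) :
    (1 - t ^ 2) * (1 - s ^ 2 + t * s ^ 2) / 3 + t * (1 - t ^ 2) * s ≤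
      (1 / 12) * (1 + t) * (9 * t ^ 2 - 4 * t + 4) := by
  -- the difference of the two sides is `(1 + t) (3t - 2(1 - t)s)² / 12`
  nlinarith [mul_nonneg (by linarith : (0:ℝ) ≤ 1 + t) (sq_nonneg (3 * t - 2 * (1 - t) * s))]

lemma schur_estimate_le_of_two_fifths_le {t s : ℝ} (ht : 2 / 5 ≤ t) (ht1 : t ≤ 1) (hs0 : 0 ≤ s)
    (hs1 : s ≤ 1) :
    (1 - t ^ 2) * (1 - s ^ 2 + t * s ^ 2) / 3 + t * (1 - t ^ 2) * s ≤ (4 / 3) * t * (1 - t ^ 2) := by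
  have h1 : 0 ≤ 1 - t ^ 2 := by nlinarith
  have h3 : 0 ≤ (4 * t - 1) - (1 - t) * s := by nlinarith
  nlinarith [mul_nonneg (mul_nonneg h1 (sub_nonneg.mpr hs1)) h3]

theorem stmt_11_general (ω : ℂ → ℂ) (c : ℕ → ℂ)
    (hd : DifferentiableOn ℂ ω (ball 0 1))
    (hb : ∀ z ∈ ball (0:ℂ) 1, ‖deriv ω z‖ ≤ 1)
    (hc : ∀ z ∈ ball (0:ℂ) 1, HasSum (fun n : ℕ => c (n + 1) * z ^ (n + 1)) (ω z)) :
    (‖c 1‖ ≤ 2/5 → ‖c 3 - 2 * c 1 * c 2‖ ≤ (1/12) * (1 + ‖c 1‖) * (9 * ‖c 1‖^2 - 4 * ‖c 1‖ + 4)) ∧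
    (2/5 ≤ ‖c 1‖ → ‖c 3 - 2 * c 1 * c 2‖ ≤ (4/3) * ‖c 1‖ * (1 - ‖c 1‖^2)) := by
  have hcoeff (n : ℕ) : iteratedDeriv n (deriv ω) 0 = (n + 1).factorial * c (n + 1) := by
    have hω : ∀ z ∈ ball (0 : ℂ) (1 : ℝ≥0),
        HasSum (fun n ↦ Function.update c 0 0 n * z ^ n) (ω z) := fun z hz ↦
      (hasSum_nat_add_iff' 1).mp (by simpa using hc z (by simpa using hz))
    simpa [← iteratedDeriv_succ'] using iteratedDeriv_eq_factorial_mul_of_hasSum one_pos hω (n + 1)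
  have hfd : DifferentiableOn ℂ (deriv ω) (ball 0 1) :=
    (hd.analyticOnNhd isOpen_ball).deriv.differentiableOn
  obtain ⟨b₀, b₁, hb₀, hb₁, h₂, h₃⟩ :=
    exists_schur_parameters hfd fun z hz ↦ mem_closedBall_zero_iff.mpr (hb z hz)
  have hc₁ : deriv ω 0 = c 1 := by simpa using hcoeff 0
  have hc₂ : deriv (deriv ω) 0 = 2 * c 2 := by simpa using hcoeff 1
  have hc₃ : iteratedDeriv 2 (deriv ω) 0 = 6 * c 3 := by simpa [Nat.factorial] using hcoeff 2
  rw [hc₁, hc₂] at h₂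
  rw [hc₁, hc₃] at h₃
  have ht : ‖c 1‖ ≤ 1 := hc₁ ▸ hb 0 (mem_ball_self one_pos)
  have hbound := norm_sub_two_mul_le ht hb₁ h₂ h₃
  exact ⟨fun _ ↦ hbound.trans (schur_estimate_le_cubic (norm_nonneg _) _), fun h ↦
    hbound.trans (schur_estimate_le_of_two_fifths_le h ht (norm_nonneg _) hb₀)⟩

theorem stmt_11 (ω : ℂ → ℂ) (c : ℕ → ℂ)
    (hd : DifferentiableOn ℂ ω (ball 0 1))
    (h0 : ω 0 = 0)
    (hb : ∀ z ∈ ball (0:ℂ) 1, ‖deriv ω z‖ ≤ 1)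
    (hc : ∀ z ∈ ball (0:ℂ) 1, HasSum (fun n : ℕ => c (n + 1) * z ^ (n + 1)) (ω z)) :
    (‖c 1‖ ≤ 2/5 → ‖c 3 - 2 * c 1 * c 2‖ ≤ (1/12) * (1 + ‖c 1‖) * (9 * ‖c 1‖^2 - 4 * ‖c 1‖ + 4)) ∧
    (2/5 ≤ ‖c 1‖ → ‖c 3 - 2 * c 1 * c 2‖ ≤ (4/3) * ‖c 1‖ * (1 - ‖c 1‖^2)) :=
  stmt_11_general ω c hd hb hc
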